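/- Let n = 4k ≥ 12 be an integer divisible by four and let G be a complete edge-colored graph with coloring γ in which no n-cycle is rainbow. Suppose G contains a rainbow (3n−10)-cycle v_0 → v_1 → ⋯ → v_{3n−11} → v_0 with (pairwise distinct) edge colors c_i = γ(v_i, v_{i+1}), all indices taken modulo 3n−10, and suppose that γ(v_i, v_{i+n−1}) ∈ {c_i, c_{i+1}, c_{i+2}} for every i. Then γ(v_i, v_{i+n−7}) ∈ {c_{i+n−7}, c_{i+n−6}, c_{i+n−5}} for every i modulo 3n−10. -/

import Mathlib

/-!
Write `m = 3n - 10` and measure positions on the rainbow cycle from `v_i`. For `0 ≤ e ≤ n - 2`,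
the chord from position `n - 7 + e` to `2n - 8 + e` has length `n - 1`, so its color is `c_j`
with `n - 7 + e ≤ j ≤ n - 5 + e`. Together with the chord `v_i v_{i+n-7}` and two arcs of the
rainbow cycle it closes the `n`-cycle `0, n - 7, …, n - 7 + e, 2n - 8 + e, …, m - 1`, whose edges
other than `v_i v_{i+n-7}` have pairwise distinct colors. Since this cycle is not rainbow,
`γ(v_i, v_{i+n-7}) = c_{i+a}` with `a ∈ [n - 7, n - 5 + e] ∪ [2n - 8 + e, m)`. Taking `e = 0`
produces `a`; if `a ≥ 2n - 8`, the choice `e = a - (2n - 9)` excludes it.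
-/

/-- A rainbow `m`-cycle in the complete graph on `V` edge-colored by `γ`:
pairwise distinct vertices `v i` (`i` mod `m`) with pairwise distinct edge colors
`γ (v i) (v (i+1))`. -/
def RainbowCycle {V C : Type*} (γ : V → V → C) (m : ℕ) (v : ZMod m → V) : Prop :=
  Function.Injective v ∧ Function.Injective (fun i : ZMod m => γ (v i) (v (i + 1)))

theorem ZMod.natCast_injOn_Iio (m : ℕ) : Set.InjOn (Nat.cast : ℕ → ZMod m) (Set.Iio m) :=
  fun a ha b hb h => by
    simpa [ZMod.val_cast_of_lt ha, ZMod.val_cast_of_lt hb] using congrArg ZMod.val h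

section RainbowCycle

variable {V C : Type*} {γ : V → V → C}

theorem RainbowCycle.injective_color {m : ℕ} {v : ZMod m → V} (hv : RainbowCycle γ m v)
    {c : ZMod m → C} (hc : ∀ i, c i = γ (v i) (v (i + 1))) : Function.Injective c := by
  rw [funext hc]
  exact hv.2

theorem exists_edge_color_eq_of_forall_not_rainbow {n : ℕ} [NeZero n]
    (hno : ∀ u : ZMod n → V, ¬ RainbowCycle γ n u) {w : ℕ → V}
    (hw : Set.InjOn w (Set.Iio n)) (hwn : w n = w 0)
    (hcol : Set.InjOn (fun s => γ (w s) (w (s + 1))) (Set.Ioo 0 n)) :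
    ∃ t, 0 < t ∧ t < n ∧ γ (w 0) (w 1) = γ (w t) (w (t + 1)) := by
  have hsucc (x : ZMod n) : w (x + 1).val = w (x.val + 1) := by
    rw [show x + 1 = ((x.val + 1 : ℕ) : ZMod n) by simp, ZMod.val_natCast]
    rcases (show x.val + 1 ≤ n from x.val_lt).lt_or_eq with h | h
    · rw [Nat.mod_eq_of_lt h]
    · rw [h, Nat.mod_self, hwn]
  have hu : Function.Injective fun x : ZMod n => w x.val := fun x y h =>
    ZMod.val_injective n (hw x.val_lt y.val_lt h)
  obtain ⟨x, y, hxy, hne⟩ := Function.not_injective_iff.mp fun h => hno _ ⟨hu, h⟩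
  simp only [hsucc] at hxy
  have hval : x.val ≠ y.val := fun h => hne (ZMod.val_injective n h)
  rcases Nat.eq_zero_or_pos x.val with hx | hx
  · exact ⟨y.val, by omega, y.val_lt, by rwa [hx] at hxy⟩
  rcases Nat.eq_zero_or_pos y.val with hy | hy
  · exact ⟨x.val, hx, x.val_lt, by rw [hy] at hxy; exact hxy.symm⟩
  exact absurd (hcol ⟨hx, x.val_lt⟩ ⟨hy, y.val_lt⟩ hxy) hval

theorem RainbowCycle.exists_chord_color_eq_of_detour {m n : ℕ} {v : ZMod m → V}
    (hv : RainbowCycle γ m v) {c : ZMod m → C} (hc : ∀ i, c i = γ (v i) (v (i + 1)))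
    (hno : ∀ u : ZMod n → V, ¬ RainbowCycle γ n u) (i : ZMod m) {p q r j : ℕ}
    (hp : 0 < p) (hpq : p ≤ q) (hqj : q ≤ j) (hjr : j < r) (hrm : r ≤ m)
    (hn : n + p + r = m + q + 2) (hchord : γ (v (i + q)) (v (i + r)) = c (i + j)) :
    ∃ a, (p ≤ a ∧ a ≤ j ∨ r ≤ a ∧ a < m) ∧ γ (v i) (v (i + p)) = c (i + a) := by
  have : NeZero n := ⟨by omega⟩
  -- `g s` is the position of the `s`-th vertex of the cycle `0, p, …, q, r, …, m - 1`, and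
  -- `f s` is the index of the color of its `s`-th edge
  let g : ℕ → ℕ := fun s =>
    if s = 0 then 0 else if s ≤ q - p + 1 then p - 1 + s else s + r + p - (q + 2)
  let f : ℕ → ℕ := fun s => if s = q - p + 1 then j else g s
  have hg_lt (s : ℕ) (hs : s < n) : g s < m := by simp only [g]; split_ifs <;> omega
  have hf_lt (s : ℕ) (hs : s < n) : f s < m := by simp only [f, g]; split_ifs <;> omega
  have hedge : ∀ s ∈ Set.Ioo 0 n, γ (v (i + g s)) (v (i + g (s + 1))) = c (i + f s) := by
    rintro s ⟨hs0, hsn⟩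
    have : (g (s + 1) = g s + 1 ∧ f s = g s) ∨ (g s = q ∧ g (s + 1) = r ∧ f s = j) := by
      simp only [f, g, Nat.add_one_ne_zero, if_false]; split_ifs <;> omega
    rcases this with ⟨hsucc, hf⟩ | ⟨hq, hr, hf⟩
    · rw [hf, hsucc, hc, Nat.cast_succ, add_assoc]
    · rw [hf, hq, hr, hchord]
  have hcol : Set.InjOn (fun s => c (i + f s)) (Set.Ioo 0 n) := by
    rintro s ⟨hs0, hsn⟩ t ⟨ht0, htn⟩ h
    have := ZMod.natCast_injOn_Iio m (hf_lt s hsn) (hf_lt t htn)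
      (add_left_cancel (hv.injective_color hc h))
    simp only [f, g] at this; split_ifs at this <;> omega
  have hw : Set.InjOn (fun s => v (i + g s)) (Set.Iio n) := by
    intro s (hs : s < n) t (ht : t < n) h
    have := ZMod.natCast_injOn_Iio m (hg_lt s hs) (hg_lt t ht) (add_left_cancel (hv.1 h))
    simp only [g] at this; split_ifs at this <;> omega
  have hwn : v (i + g n) = v (i + g 0) := by
    simp [g, show n ≠ 0 by omega, show ¬ n ≤ q - p + 1 by omega,
      show n + r + p - (q + 2) = m by omega]
  obtain ⟨t, ht0, htn, ht⟩ :=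
    exists_edge_color_eq_of_forall_not_rainbow hno hw hwn (hcol.congr fun s hs => (hedge s hs).symm)
  refine ⟨f t, by simp only [f, g]; split_ifs <;> omega, ?_⟩
  rw [← hedge t ⟨ht0, htn⟩, ← ht]
  simp [g, show 1 ≤ q - p + 1 by omega, Nat.sub_add_cancel hp]

theorem RainbowCycle.exists_chord_color_index {m n : ℕ} {v : ZMod m → V} (hv : RainbowCycle γ m v)
    {c : ZMod m → C} (hc : ∀ i, c i = γ (v i) (v (i + 1)))
    (hno : ∀ u : ZMod n → V, ¬ RainbowCycle γ n u) (hn : 8 ≤ n) (hm : m = 3 * n - 10)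
    (h1 : ∀ i, γ (v i) (v (i + ((n - 1 : ℕ) : ZMod m))) ∈ ({c i, c (i + 1), c (i + 2)} : Set C))
    (i : ZMod m) {e : ℕ} (he : e ≤ n - 2) :
    ∃ a < m, n - 7 ≤ a ∧ (a ≤ n - 5 + e ∨ 2 * n - 8 + e ≤ a) ∧
      γ (v i) (v (i + ((n - 7 : ℕ) : ZMod m))) = c (i + a) := by
  obtain ⟨j, hqj, hjq, hj⟩ : ∃ j, n - 7 + e ≤ j ∧ j ≤ n - 5 + e ∧
      γ (v (i + (n - 7 + e : ℕ))) (v (i + (n - 7 + e : ℕ) + (n - 1 : ℕ))) = c (i + j) := by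
    rcases h1 (i + (n - 7 + e : ℕ)) with h | h | h
    · exact ⟨n - 7 + e, le_rfl, by omega, h⟩
    · refine ⟨n - 7 + e + 1, by omega, by omega, ?_⟩
      rwa [Nat.cast_succ, ← add_assoc]
    · refine ⟨n - 7 + e + 2, by omega, by omega, ?_⟩
      rwa [Nat.cast_add _ 2, Nat.cast_ofNat, ← add_assoc]
  rw [add_assoc, ← Nat.cast_add] at hj
  obtain ⟨a, ha, hca⟩ := hv.exists_chord_color_eq_of_detour hc hno i (p := n - 7)
    (by omega) (by omega) hqj (by omega) (by omega) (by omega) hj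
  exact ⟨a, by omega, by omega, by omega, hca⟩

end RainbowCycle

theorem stmt8_general {V C : Type*} (γ : V → V → C)
    (n : ℕ) (hn : 12 ≤ n)
    (hno : ∀ u : ZMod n → V, ¬ RainbowCycle γ n u)
    (v : ZMod (3 * n - 10) → V) (hv : RainbowCycle γ (3 * n - 10) v)
    (c : ZMod (3 * n - 10) → C) (hc : ∀ i, c i = γ (v i) (v (i + 1)))
    (h1 : ∀ i, γ (v i) (v (i + ((n - 1 : ℕ) : ZMod (3 * n - 10)))) ∈
      ({c i, c (i + 1), c (i + 2)} : Set C)) :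
    ∀ i, γ (v i) (v (i + ((n - 7 : ℕ) : ZMod (3 * n - 10)))) ∈
      ({c (i + ((n - 7 : ℕ) : ZMod (3 * n - 10))),
        c (i + ((n - 6 : ℕ) : ZMod (3 * n - 10))),
        c (i + ((n - 5 : ℕ) : ZMod (3 * n - 10)))} : Set C) := by
  intro i
  obtain ⟨a, ham, ha7, ha | ha, hca⟩ :=
    hv.exists_chord_color_index hc hno (by omega) rfl h1 i (e := 0) (by omega)
  · rw [hca]
    rcases (by omega : a = n - 7 ∨ a = n - 6 ∨ a = n - 5) with rfl | rfl | rfl <;> simp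
  · -- for this `e` the edge at position `a` lies on the arc that the detour skips
    obtain ⟨b, hbm, -, hb, hcb⟩ :=
      hv.exists_chord_color_index hc hno (by omega) rfl h1 i (e := a - (2 * n - 9)) (by omega)
    have hab : a = b := ZMod.natCast_injOn_Iio _ ham hbm
      (add_left_cancel (hv.injective_color hc (hca.symm.trans hcb)))
    omega

/-- If `n = 4k ≥ 12`, no `n`-cycle is rainbow, `v` is a rainbow `(3n-10)`-cycle
with colors `c i = γ (v i) (v (i+1))`, and `γ (v i) (v (i+n-1)) ∈ {c i, c (i+1), c (i+2)}`
for every `i`, then `γ (v i) (v (i+n-7)) ∈ {c (i+n-7), c (i+n-6), c (i+n-5)}` for every `i`. -/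
theorem stmt8 {V C : Type*} (γ : V → V → C) (hsymm : ∀ x y, γ x y = γ y x)
    (n k : ℕ) (hk : n = 4 * k) (hn : 12 ≤ n)
    (hno : ∀ u : ZMod n → V, ¬ RainbowCycle γ n u)
    (v : ZMod (3 * n - 10) → V) (hv : RainbowCycle γ (3 * n - 10) v)
    (c : ZMod (3 * n - 10) → C) (hc : ∀ i, c i = γ (v i) (v (i + 1)))
    (h1 : ∀ i, γ (v i) (v (i + ((n - 1 : ℕ) : ZMod (3 * n - 10)))) ∈
      ({c i, c (i + 1), c (i + 2)} : Set C)) :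
    ∀ i, γ (v i) (v (i + ((n - 7 : ℕ) : ZMod (3 * n - 10)))) ∈
      ({c (i + ((n - 7 : ℕ) : ZMod (3 * n - 10))),
        c (i + ((n - 6 : ℕ) : ZMod (3 * n - 10))),
        c (i + ((n - 5 : ℕ) : ZMod (3 * n - 10)))} : Set C) :=
  stmt8_general γ n hn hno v hv c hc h1
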